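/- Let (R, m) be a local commutative ring, S a commutative ring, f : R → S a ring homomorphism, and J a proper ideal of S with J ⊆ Jac(S). Assume f maps every regular element of R to a regular element of S and that R ⋈^f J satisfies condition ★. If R is a Prüfer ring and J = f(r)·J for every regular element r of R, then R ⋈^f J is a Prüfer ring. -/

import Mathlib

open Pointwise

/-- The amalgamation `R ⋈^f J` of `R` with `S` along the ideal `J` with respect to
`f : R →+* S`, as a subring of `R × S`. -/
def amalgamation {R S : Type*} [CommRing R] [CommRing S] (f : R →+* S) (J : Ideal S) :
    Subring (R × S) where
  carrier := {p | ∃ j ∈ J, p.2 = f p.1 + j}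
  zero_mem' := ⟨0, J.zero_mem, by simp⟩
  one_mem' := ⟨0, J.zero_mem, by simp⟩
  add_mem' := by
    rintro ⟨a, a'⟩ ⟨b, b'⟩ ⟨j, hj, h1⟩ ⟨k, hk, h2⟩
    exact ⟨j + k, J.add_mem hj hk, by simp_all; ring⟩
  neg_mem' := by
    rintro ⟨a, a'⟩ ⟨j, hj, h1⟩
    exact ⟨-j, J.neg_mem hj, by simp_all; ring⟩
  mul_mem' := by
    rintro ⟨a, a'⟩ ⟨b, b'⟩ ⟨j, hj, h1⟩ ⟨k, hk, h2⟩
    refine ⟨f a * k + j * f b + j * k, ?_, by simp_all; ring⟩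
    exact J.add_mem (J.add_mem (J.mul_mem_left _ hk) (J.mul_mem_right _ hj))
      (J.mul_mem_right _ hj)

/-- The set of zero-divisors of a commutative ring `A`. -/
def zdivSet (A : Type*) [CommRing A] : Set A := {a | ∃ b, b ≠ 0 ∧ a * b = 0}

/-- A commutative ring is a Prüfer ring if every nonzero finitely generated regular ideal
is projective (equivalently, invertible). -/
def IsPruferRing (A : Type*) [CommRing A] : Prop :=
  ∀ I : Ideal A, I ≠ ⊥ → I.FG → (∃ r ∈ I, r ∈ nonZeroDivisors A) → Module.Projective A I

/-- Condition `★`: the zero-divisors of `R ⋈^f J` are exactly the elements whose first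
coordinate is a zero-divisor of `R` together with the elements `(r, f r + j)` such that
`f r + j` is killed by some nonzero element of `J`. -/
def conditionStar {R S : Type*} [CommRing R] [CommRing S] (f : R →+* S) (J : Ideal S) : Prop :=
  ∀ x : amalgamation f J, x ∈ zdivSet (amalgamation f J) ↔
    ((x : R × S).1 ∈ zdivSet R ∨ ∃ j' ∈ J, j' ≠ 0 ∧ j' * (x : R × S).2 = 0)

/-!
Let `A = R ⋈^f J` and let `I` be a finitely generated ideal of `A` containing a regular element
`y`. By `★`, the first coordinate of `y` is regular in `R`, so the projection of `I` to `R` is a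
finitely generated regular ideal, hence projective, hence (over a local ring) principal, generated
by a regular element `a`. Since `J = f(a) J`, every element of `A` whose first coordinate is a
multiple of `a` is a multiple of `(a, f a)`; and `J ⊆ Jac(S)` makes every element of `A` with
first coordinate `1` a unit, so `(a, f a)` lies in `I`. Hence `I` is generated by the regular
element `(a, f a)`, and is free of rank one.
-/

open scoped nonZeroDivisors

section CommRing

variable {A : Type*} [CommRing A]

theorem mem_zdivSet_iff {a : A} : a ∈ zdivSet A ↔ a ∉ A⁰ := by
  simp [notMem_nonZeroDivisors_iff_left, zdivSet, Set.Nonempty, and_comm]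

theorem mem_nonZeroDivisors_of_mem_span_singleton {a r : A} (hr : r ∈ Ideal.span {a})
    (hr' : r ∈ A⁰) : a ∈ A⁰ := by
  obtain ⟨c, rfl⟩ := Ideal.mem_span_singleton'.mp hr
  exact (mul_mem_nonZeroDivisors.mp hr').2

theorem Ideal.projective_span_singleton_of_mem_nonZeroDivisors {a : A} (ha : a ∈ A⁰) :
    Module.Projective A (Ideal.span {a}) := by
  have hinj : Function.Injective (LinearMap.toSpanSingleton A A a) :=
    LinearMap.ker_eq_bot.mp (LinearMap.ker_toSpanSingleton_eq_bot_iff.mpr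
      (nonZeroDivisorsRight_eq_nonZeroDivisors (M₀ := A) ▸ ha))
  exact Module.Projective.of_equiv ((LinearEquiv.ofInjective _ hinj).trans
    (LinearEquiv.ofEq _ _ (LinearMap.span_singleton_eq_range A A a).symm))

theorem Ideal.isPrincipal_of_projective [IsLocalRing A] (I : Ideal A) (hI : I.FG)
    [Module.Projective A I] : I.IsPrincipal := by
  have : Module.Finite A I := Module.Finite.iff_fg.mpr hI
  have : Module.FinitePresentation A I := Module.finitePresentation_of_projective A I
  have : Module.Free A I := Module.free_of_flat_of_isLocalRing
  exact (Submodule.rank_le_one_iff_isPrincipal I).mp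
    ((Submodule.rank_le I).trans_eq (Module.rank_self A))

end CommRing

namespace amalgamation

variable {R S : Type*} [CommRing R] [CommRing S] (f : R →+* S) (J : Ideal S)

def fst : amalgamation f J →+* R :=
  (RingHom.fst R S).comp (amalgamation f J).subtype

def diag : R →+* amalgamation f J :=
  (RingHom.prod (RingHom.id R) f).codRestrict _ fun _ => ⟨0, J.zero_mem, by simp⟩

@[simp]
theorem fst_diag (r : R) : fst f J (diag f J r) = r := rfl

theorem fst_surjective : Function.Surjective (fst f J) :=
  fun r => ⟨diag f J r, rfl⟩

variable {f J}

theorem fst_mem_nonZeroDivisors (hstar : conditionStar f J) {y : amalgamation f J}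
    (hy : y ∈ (amalgamation f J)⁰) : fst f J y ∈ R⁰ := by
  by_contra h
  exact mem_zdivSet_iff.mp ((hstar y).mpr (Or.inl (mem_zdivSet_iff.mpr h))) hy

theorem diag_mem_nonZeroDivisors {a : R} (ha : a ∈ R⁰) (hfa : f a ∈ S⁰) :
    diag f J a ∈ (amalgamation f J)⁰ := by
  refine mem_nonZeroDivisors_iff_right.mpr fun z hz => ?_
  have hz' : (z : R × S) * (a, f a) = 0 := congrArg Subtype.val hz
  exact Subtype.ext (Prod.ext (mem_nonZeroDivisors_iff_right.mp ha _ (congrArg Prod.fst hz'))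
    (mem_nonZeroDivisors_iff_right.mp hfa _ (congrArg Prod.snd hz')))

theorem isUnit_of_fst_eq_one (hJ : J ≤ Ideal.jacobson ⊥) {x : amalgamation f J}
    (hx : fst f J x = 1) : IsUnit x := by
  obtain ⟨j, hj, hxj⟩ := x.2
  change (x : R × S).1 = 1 at hx
  rw [hx, map_one] at hxj
  obtain ⟨v, hv⟩ : IsUnit (j * 1 + 1) := Ideal.mem_jacobson_bot.mp (hJ hj) 1
  have hvj : (↑v⁻¹ : S) * (j * 1 + 1) = 1 := hv ▸ v.inv_mul
  have hmem : ((1 : R), (↑v⁻¹ : S)) ∈ amalgamation f J :=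
    ⟨-(↑v⁻¹ * j), J.neg_mem (J.mul_mem_left _ hj), by
      simp only [map_one]; linear_combination hvj⟩
  refine .of_mul_eq_one ⟨_, hmem⟩ (Subtype.ext (Prod.ext ?_ ?_))
  · simp [hx]
  · change (x : R × S).2 * ↑v⁻¹ = 1
    rw [hxj]; linear_combination hvj

theorem comap_fst_span_singleton {a : R} (hJa : f a • J = J) :
    (Ideal.span {a}).comap (fst f J) = Ideal.span {diag f J a} := by
  refine le_antisymm (fun w hw => ?_) (Ideal.span_le.mpr ?_)
  · obtain ⟨c, hc⟩ := Ideal.mem_span_singleton'.mp (Ideal.mem_comap.mp hw)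
    obtain ⟨j, hj, hwj⟩ := w.2
    obtain ⟨k, hk, hkj⟩ : ∃ k ∈ J, f a • k = j := Set.mem_smul_set.mp <| by
      rwa [← Submodule.coe_pointwise_smul, hJa]
    refine Ideal.mem_span_singleton'.mpr
      ⟨⟨(c, f c + k), k, hk, rfl⟩, Subtype.ext (Prod.ext ?_ ?_)⟩
    · exact hc
    · change (f c + k) * f a = (w : R × S).2
      change c * a = (w : R × S).1 at hc
      rw [hwj, ← hkj, ← hc, map_mul, smul_eq_mul]; ring
  · simp

theorem eq_span_diag_of_map_fst_eq (hJ : J ≤ Ideal.jacobson ⊥) {a : R} (ha : a ∈ R⁰)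
    (hJa : f a • J = J) {I : Ideal (amalgamation f J)}
    (hI : I.map (fst f J) = Ideal.span {a}) : I = Ideal.span {diag f J a} := by
  have hle : I ≤ Ideal.span {diag f J a} := by
    rw [← comap_fst_span_singleton hJa, ← hI]
    exact Ideal.le_comap_map
  refine le_antisymm hle (Ideal.span_le.mpr (Set.singleton_subset_iff.mpr ?_))
  obtain ⟨x, hxI, hxa⟩ := (Ideal.mem_map_iff_of_surjective _ (fst_surjective f J)).mp
    (hI ▸ Ideal.mem_span_singleton_self a)
  obtain ⟨c, rfl⟩ := Ideal.mem_span_singleton'.mp (hle hxI)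
  rw [map_mul, fst_diag] at hxa
  have hc : fst f J c = 1 := sub_eq_zero.mp <|
    mem_nonZeroDivisors_iff_right.mp ha _ (by rw [sub_mul, hxa, one_mul, sub_self])
  exact (Ideal.unit_mul_mem_iff_mem I (isUnit_of_fst_eq_one hJ hc)).mp hxI

end amalgamation

open amalgamation in
theorem stmt8_general {R S : Type*} [CommRing R] [CommRing S] [IsLocalRing R]
    (f : R →+* S) (J : Ideal S) (hJjac : J ≤ Ideal.jacobson (⊥ : Ideal S))
    (hreg : ∀ r ∈ nonZeroDivisors R, f r ∈ nonZeroDivisors S)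
    (hstar : conditionStar f J)
    (hR : IsPruferRing R) (hrJ : ∀ r ∈ nonZeroDivisors R, f r • J = J) :
    IsPruferRing (amalgamation f J) := by
  rintro I - hIfg ⟨y, hyI, hy⟩
  have hy₁ : fst f J y ∈ R⁰ := fst_mem_nonZeroDivisors hstar hy
  have hy₁I : fst f J y ∈ I.map (fst f J) := Ideal.mem_map_of_mem _ hyI
  have hI₁fg : (I.map (fst f J)).FG := hIfg.map _
  have : Module.Projective R (I.map (fst f J)) :=
    hR _ (Submodule.ne_bot_iff _ |>.mpr ⟨_, hy₁I, nonZeroDivisors.ne_zero hy₁⟩) hI₁fg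
      ⟨_, hy₁I, hy₁⟩
  obtain ⟨a, ha⟩ : ∃ a, I.map (fst f J) = Ideal.span {a} :=
    (Ideal.isPrincipal_of_projective _ hI₁fg).principal
  have haR : a ∈ R⁰ := mem_nonZeroDivisors_of_mem_span_singleton (ha ▸ hy₁I) hy₁
  rw [eq_span_diag_of_map_fst_eq hJjac haR (hrJ a haR) ha]
  exact Ideal.projective_span_singleton_of_mem_nonZeroDivisors
    (diag_mem_nonZeroDivisors haR (hreg a haR))

theorem stmt8 {R S : Type*} [CommRing R] [CommRing S] [IsLocalRing R]
    (f : R →+* S) (J : Ideal S) (hJ : J ≠ ⊤) (hJjac : J ≤ Ideal.jacobson (⊥ : Ideal S))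
    (hreg : ∀ r ∈ nonZeroDivisors R, f r ∈ nonZeroDivisors S)
    (hstar : conditionStar f J)
    (hR : IsPruferRing R) (hrJ : ∀ r ∈ nonZeroDivisors R, f r • J = J) :
    IsPruferRing (amalgamation f J) :=
  stmt8_general f J hJjac hreg hstar hR hrJ
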